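/- Let (Ω, μ) be a probability space and let H₁, G₁, H₂, G₂ : Ω → ℝ be nonnegative measurable functions with G₁ > 0 and G₂ > 0 almost everywhere, such that ω ↦ log(1 + H₁(ω)/G₁(ω)) and ω ↦ log(1 + H₂(ω)/G₂(ω)) are integrable, and H₁, H₂ integrable. Let T ≥ 2 be a natural number and ρ a real number with ρ² < 1. For P > 1 define R⁺(P) = (1/T)·(−log(1 − ρ²)) + S₁(P) + S₂(P), where for i = 1, 2, S_i(P) is the supremum over all measurable f : ℝ → ℝ with f ≥ 0 and ∫ f(H_i(ω)) dμ(ω) ≤ P of ∫ log(1 + f(H_i)·H_i/(1 + f(H_i)·G_i)) dμ; and define R_PD(P) as in Proposition 1 with the power split P₁ = P − √P, P₂ = √P/(T−1), α = P₁/(P₁+1): R_PD(P) = (1/T)·(−log(1 − α²ρ²)) + ((T−1)/T)·( ∫ log(1 + P₂H₁/(1 + P₂G₁)) dμ − log(1 + P₂/(1+P₁)) + ∫ log(1 + P₂H₂/(1 + P₂G₂)) dμ − log(1 + P₂/(1+P₁)) ). Then R⁺(P) − R_PD(P) tends to γ/T as P tends to infinity, where γ = ∫ log(1 + H₁/G₁)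 dμ + ∫ log(1 + H₂/G₂) dμ. -/

import Mathlib

/-!
Every power allocation `f ≥ 0` gives a received SNR `f H / (1 + f G)` below `H / G`, so each
`S_i(P)` is at most `γ_i = ∫ log (1 + H_i / G_i)`, while the constant allocation `f = P` attains
rates tending to `γ_i` by dominated convergence (dominated by `log (1 + H_i / G_i)` itself);
hence `S_i(P) → γ_i`. On the lower-bound side the correlation term tends to `-log (1 - ρ²)`
since `α → 1`, the integrals at power `P₂ = √P / (T - 1) → ∞` tend to `γ_i` by the same
domination, and the penalties `log (1 + P₂ / (1 + P₁))` vanish since `P₂ = o(P₁)`. What survives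
in the difference is `γ₁ + γ₂ - (T - 1)/T · (γ₁ + γ₂) = (γ₁ + γ₂) / T`.
-/

open Filter MeasureTheory Topology

lemma mul_div_one_add_mul_le_div {t a b : ℝ} (ht : 0 ≤ t) (ha : 0 ≤ a) (hb : 0 < b) :
    t * a / (1 + t * b) ≤ a / b := by
  rw [div_le_div_iff₀ (by positivity) hb]
  nlinarith

lemma norm_log_one_add_mul_div_le {t a b : ℝ} (ht : 0 ≤ t) (ha : 0 ≤ a) (hb : 0 < b) :
    ‖Real.log (1 + t * a / (1 + t * b))‖ ≤ Real.log (1 + a / b) := by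
  have hsnr : 0 ≤ t * a / (1 + t * b) := by positivity
  rw [Real.norm_of_nonneg (Real.log_nonneg (by linarith))]
  exact Real.log_le_log (by linarith) (by linarith [mul_div_one_add_mul_le_div ht ha hb])

lemma tendsto_mul_div_one_add_mul_atTop (a : ℝ) {b : ℝ} (hb : 0 < b) :
    Tendsto (fun t : ℝ => t * a / (1 + t * b)) atTop (𝓝 (a / b)) := by
  have hlim : Tendsto (fun t : ℝ => a / (t⁻¹ + b)) atTop (𝓝 (a / (0 + b))) :=
    tendsto_const_nhds.div (tendsto_inv_atTop_zero.add tendsto_const_nhds) (by positivity)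
  rw [zero_add] at hlim
  refine hlim.congr' ?_
  filter_upwards [eventually_gt_atTop 0] with t ht
  field_simp

section Allocation

variable {Ω : Type*} [MeasurableSpace Ω] {μ : Measure Ω} {H G : Ω → ℝ}

lemma measurable_log_one_add_mul_div {c : Ω → ℝ} (hc : Measurable c) (hH : Measurable H)
    (hG : Measurable G) :
    Measurable fun ω => Real.log (1 + c ω * H ω / (1 + c ω * G ω)) := by
  fun_prop

lemma integrable_log_one_add_mul_div {c : Ω → ℝ} (hcm : Measurable c) (hc : ∀ ω, 0 ≤ c ω)
    (hHm : Measurable H) (hGm : Measurable G) (hH : ∀ ω, 0 ≤ H ω) (hG : ∀ᵐ ω ∂μ, 0 < G ω)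
    (hint : Integrable (fun ω => Real.log (1 + H ω / G ω)) μ) :
    Integrable (fun ω => Real.log (1 + c ω * H ω / (1 + c ω * G ω))) μ :=
  hint.mono' (measurable_log_one_add_mul_div hcm hHm hGm).aestronglyMeasurable <| by
    filter_upwards [hG] with ω hGω using norm_log_one_add_mul_div_le (hc ω) (hH ω) hGω

lemma tendsto_integral_log_one_add_mul_div {ι : Type*} {l : Filter ι} [l.IsCountablyGenerated]
    {c : ι → ℝ} (hc : Tendsto c l atTop) (hHm : Measurable H) (hGm : Measurable G)
    (hH : ∀ ω, 0 ≤ H ω) (hG : ∀ᵐ ω ∂μ, 0 < G ω)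
    (hint : Integrable (fun ω => Real.log (1 + H ω / G ω)) μ) :
    Tendsto (fun i => ∫ ω, Real.log (1 + c i * H ω / (1 + c i * G ω)) ∂μ) l
      (𝓝 (∫ ω, Real.log (1 + H ω / G ω) ∂μ)) := by
  refine tendsto_integral_filter_of_dominated_convergence _
    (Eventually.of_forall fun i =>
      (measurable_log_one_add_mul_div measurable_const hHm hGm).aestronglyMeasurable) ?_ hint ?_
  · filter_upwards [hc.eventually_ge_atTop 0] with i hi
    filter_upwards [hG] with ω hGω using norm_log_one_add_mul_div_le hi (hH ω) hGω
  · filter_upwards [hG] with ω hGω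
    have hsnr := tendsto_mul_div_one_add_mul_atTop (H ω) hGω
    have hpos : 1 + H ω / G ω ≠ 0 := by have := div_nonneg (hH ω) hGω.le; positivity
    exact ((Real.continuousAt_log hpos).tendsto.comp
      (tendsto_const_nhds.add hsnr)).comp hc

variable (μ H G) in
/-- The paper's `S_i(P)` is `sSup (allocationRates μ H_i G_i P)`. -/
def allocationRates (P : ℝ) : Set ℝ :=
  {r : ℝ | ∃ f : ℝ → ℝ, Measurable f ∧ (∀ x, 0 ≤ f x) ∧ (∫ ω, f (H ω) ∂μ) ≤ P ∧
    r = ∫ ω, Real.log (1 + f (H ω) * H ω / (1 + f (H ω) * G ω)) ∂μ}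

lemma integral_log_mem_upperBounds_allocationRates (hHm : Measurable H) (hGm : Measurable G)
    (hH : ∀ ω, 0 ≤ H ω) (hG : ∀ᵐ ω ∂μ, 0 < G ω)
    (hint : Integrable (fun ω => Real.log (1 + H ω / G ω)) μ) (P : ℝ) :
    ∫ ω, Real.log (1 + H ω / G ω) ∂μ ∈ upperBounds (allocationRates μ H G P) := by
  rintro r ⟨f, hfm, hf, -, rfl⟩
  refine integral_mono_ae
    (integrable_log_one_add_mul_div (hfm.comp hHm) (fun ω => hf (H ω)) hHm hGm hH hG hint) hint ?_
  filter_upwards [hG] with ω hGω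
  exact (Real.le_norm_self _).trans (norm_log_one_add_mul_div_le (hf (H ω)) (hH ω) hGω)

lemma integral_log_const_mem_allocationRates [IsProbabilityMeasure μ] {P : ℝ} (hP : 0 ≤ P) :
    ∫ ω, Real.log (1 + P * H ω / (1 + P * G ω)) ∂μ ∈ allocationRates μ H G P :=
  ⟨fun _ => P, measurable_const, fun _ => hP, by simp, rfl⟩

lemma tendsto_sSup_allocationRates [IsProbabilityMeasure μ] (hHm : Measurable H)
    (hGm : Measurable G) (hH : ∀ ω, 0 ≤ H ω) (hG : ∀ᵐ ω ∂μ, 0 < G ω)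
    (hint : Integrable (fun ω => Real.log (1 + H ω / G ω)) μ) :
    Tendsto (fun P => sSup (allocationRates μ H G P)) atTop
      (𝓝 (∫ ω, Real.log (1 + H ω / G ω) ∂μ)) := by
  have hub := integral_log_mem_upperBounds_allocationRates hHm hGm hH hG hint
  refine tendsto_of_tendsto_of_tendsto_of_le_of_le'
    (tendsto_integral_log_one_add_mul_div tendsto_id hHm hGm hH hG hint) tendsto_const_nhds ?_ ?_
  · filter_upwards [eventually_ge_atTop 0] with P hP
    exact le_csSup ⟨_, hub P⟩ (integral_log_const_mem_allocationRates hP)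
  · filter_upwards [eventually_ge_atTop 0] with P hP
    exact csSup_le ⟨_, integral_log_const_mem_allocationRates hP⟩ (hub P)

end Allocation

lemma tendsto_log_one_sub_sq_mul_sq {ι : Type*} {l : Filter ι} {α : ι → ℝ}
    (hα : Tendsto α l (𝓝 1)) {ρ : ℝ} (hρ : ρ ^ 2 ≠ 1) :
    Tendsto (fun i => Real.log (1 - α i ^ 2 * ρ ^ 2)) l (𝓝 (Real.log (1 - ρ ^ 2))) := by
  have hlim := tendsto_const_nhds (x := (1 : ℝ)).sub ((hα.pow 2).mul_const (ρ ^ 2))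
  rw [one_pow, one_mul] at hlim
  exact (Real.continuousAt_log (sub_ne_zero.2 hρ.symm)).tendsto.comp hlim

lemma tendsto_sub_sqrt_atTop : Tendsto (fun P : ℝ => P - √P) atTop atTop := by
  refine (Real.tendsto_sqrt_atTop.atTop_mul_atTop₀
    (tendsto_atTop_add_const_right _ (-1) Real.tendsto_sqrt_atTop)).congr' ?_
  filter_upwards [eventually_ge_atTop 0] with P hP
  rw [mul_add, Real.mul_self_sqrt hP]
  ring

lemma tendsto_sqrt_div_one_add_sub_sqrt_atTop :
    Tendsto (fun P : ℝ => √P / (1 + (P - √P))) atTop (𝓝 0) := by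
  have hden : Tendsto (fun P : ℝ => (√P)⁻¹ + (√P - 1)) atTop atTop :=
    (tendsto_atTop_add_const_right _ (-1) Real.tendsto_sqrt_atTop).nonneg_add_atTop
      fun P => inv_nonneg.2 (Real.sqrt_nonneg P)
  refine hden.inv_tendsto_atTop.congr' ?_
  filter_upwards [eventually_gt_atTop 0] with P hP
  have hs : 0 < √P := Real.sqrt_pos.2 hP
  rw [Pi.inv_apply]
  field_simp
  rw [mul_sub, Real.mul_self_sqrt hP.le, mul_one]

lemma tendsto_log_one_add_sqrt_div_div_atTop (c : ℝ) :
    Tendsto (fun P : ℝ => Real.log (1 + √P / c / (1 + (P - √P)))) atTop (𝓝 0) := by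
  have hlim := tendsto_const_nhds (x := (1 : ℝ)).add
    (tendsto_sqrt_div_one_add_sub_sqrt_atTop.div_const c)
  rw [zero_div, add_zero] at hlim
  simpa only [Real.log_one, div_right_comm _ c, Function.comp_def] using
    (Real.continuousAt_log one_ne_zero).tendsto.comp hlim

open Filter MeasureTheory in
theorem tendsto_gap_Rplus_RPD_atTop_general
    {Ω : Type*} [MeasurableSpace Ω] (μ : Measure Ω) [IsProbabilityMeasure μ]
    (H₁ G₁ H₂ G₂ : Ω → ℝ)
    (hH₁m : Measurable H₁) (hG₁m : Measurable G₁)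
    (hH₂m : Measurable H₂) (hG₂m : Measurable G₂)
    (hH₁ : ∀ ω, 0 ≤ H₁ ω)
    (hH₂ : ∀ ω, 0 ≤ H₂ ω)
    (hG₁pos : ∀ᵐ ω ∂μ, 0 < G₁ ω) (hG₂pos : ∀ᵐ ω ∂μ, 0 < G₂ ω)
    (hint₁ : Integrable (fun ω => Real.log (1 + H₁ ω / G₁ ω)) μ)
    (hint₂ : Integrable (fun ω => Real.log (1 + H₂ ω / G₂ ω)) μ)
    (T : ℕ) (hT : 2 ≤ T) (ρ : ℝ) (hρ : ρ ^ 2 < 1)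
    (S₁ S₂ Rplus RPD : ℝ → ℝ)
    (hS₁ : ∀ P : ℝ, S₁ P =
      sSup {r : ℝ | ∃ f : ℝ → ℝ, Measurable f ∧ (∀ x, 0 ≤ f x) ∧
        (∫ ω, f (H₁ ω) ∂μ) ≤ P ∧
        r = ∫ ω, Real.log (1 + f (H₁ ω) * H₁ ω / (1 + f (H₁ ω) * G₁ ω)) ∂μ})
    (hS₂ : ∀ P : ℝ, S₂ P =
      sSup {r : ℝ | ∃ f : ℝ → ℝ, Measurable f ∧ (∀ x, 0 ≤ f x) ∧
        (∫ ω, f (H₂ ω) ∂μ) ≤ P ∧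
        r = ∫ ω, Real.log (1 + f (H₂ ω) * H₂ ω / (1 + f (H₂ ω) * G₂ ω)) ∂μ})
    (hRplus : ∀ P : ℝ, Rplus P =
      (1 / (T : ℝ)) * (-Real.log (1 - ρ ^ 2)) + S₁ P + S₂ P)
    (hRPD : ∀ P : ℝ, RPD P =
      (1 / (T : ℝ)) *
          (-Real.log (1 - ((P - Real.sqrt P) / ((P - Real.sqrt P) + 1)) ^ 2 * ρ ^ 2)) +
        (((T : ℝ) - 1) / (T : ℝ)) *
          ((∫ ω, Real.log (1 + (Real.sqrt P / ((T : ℝ) - 1)) * H₁ ω /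
                (1 + (Real.sqrt P / ((T : ℝ) - 1)) * G₁ ω)) ∂μ) -
            Real.log (1 + (Real.sqrt P / ((T : ℝ) - 1)) / (1 + (P - Real.sqrt P))) +
            (∫ ω, Real.log (1 + (Real.sqrt P / ((T : ℝ) - 1)) * H₂ ω /
                (1 + (Real.sqrt P / ((T : ℝ) - 1)) * G₂ ω)) ∂μ) -
            Real.log (1 + (Real.sqrt P / ((T : ℝ) - 1)) / (1 + (P - Real.sqrt P))))) :
    Tendsto (fun P : ℝ => Rplus P - RPD P) atTop
      (nhds (((∫ ω, Real.log (1 + H₁ ω / G₁ ω) ∂μ) +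
        (∫ ω, Real.log (1 + H₂ ω / G₂ ω) ∂μ)) / (T : ℝ))) := by
  have hT' : (2 : ℝ) ≤ T := by exact_mod_cast hT
  have hP₂ : Tendsto (fun P : ℝ => √P / ((T : ℝ) - 1)) atTop atTop :=
    Real.tendsto_sqrt_atTop.atTop_div_const (by linarith)
  have hα : Tendsto (fun P : ℝ => (P - √P) / ((P - √P) + 1)) atTop (𝓝 1) := by
    have h := (tendsto_mul_div_one_add_mul_atTop 1 one_pos).comp tendsto_sub_sqrt_atTop
    rw [div_one] at h
    exact h.congr fun P => by simp only [Function.comp_apply]; ring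
  have hS₁' := (tendsto_sSup_allocationRates hH₁m hG₁m hH₁ hG₁pos hint₁).congr
    fun P => (hS₁ P).symm
  have hS₂' := (tendsto_sSup_allocationRates hH₂m hG₂m hH₂ hG₂pos hint₂).congr
    fun P => (hS₂ P).symm
  have hI₁ := tendsto_integral_log_one_add_mul_div hP₂ hH₁m hG₁m hH₁ hG₁pos hint₁
  have hI₂ := tendsto_integral_log_one_add_mul_div hP₂ hH₂m hG₂m hH₂ hG₂pos hint₂
  have hB := tendsto_log_one_add_sqrt_div_div_atTop ((T : ℝ) - 1)
  have hRplus' := ((tendsto_const_nhds (x := 1 / (T : ℝ) * -Real.log (1 - ρ ^ 2))).add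
    hS₁').add hS₂'
  have hRPD' := ((tendsto_log_one_sub_sq_mul_sq hα hρ.ne).neg.const_mul (1 / (T : ℝ))).add
    ((((hI₁.sub hB).add hI₂).sub hB).const_mul (((T : ℝ) - 1) / T))
  convert hRplus'.sub hRPD' using 2
  · rw [hRplus, hRPD]
  · field_simp
    ring

open Filter MeasureTheory in
/-- Corollary 1, eq. (107): the gap between the upper bound `R⁺(P)` (Theorem 1 evaluated
with Gaussian inputs and optimized power allocations) and the public-discussion achievable
rate `R_PD(P)` (Proposition 1, power split `P₁ = P − √P`, `P₂ = √P/(T−1)`) converges to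
`γ/T` as `P → ∞`, where `γ = ∫ log (1+H₁/G₁) dμ + ∫ log (1+H₂/G₂) dμ`. -/
theorem tendsto_gap_Rplus_RPD_atTop
    {Ω : Type*} [MeasurableSpace Ω] (μ : Measure Ω) [IsProbabilityMeasure μ]
    (H₁ G₁ H₂ G₂ : Ω → ℝ)
    (hH₁m : Measurable H₁) (hG₁m : Measurable G₁)
    (hH₂m : Measurable H₂) (hG₂m : Measurable G₂)
    (hH₁ : ∀ ω, 0 ≤ H₁ ω) (hG₁ : ∀ ω, 0 ≤ G₁ ω)
    (hH₂ : ∀ ω, 0 ≤ H₂ ω) (hG₂ : ∀ ω, 0 ≤ G₂ ω)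
    (hG₁pos : ∀ᵐ ω ∂μ, 0 < G₁ ω) (hG₂pos : ∀ᵐ ω ∂μ, 0 < G₂ ω)
    (hint₁ : Integrable (fun ω => Real.log (1 + H₁ ω / G₁ ω)) μ)
    (hint₂ : Integrable (fun ω => Real.log (1 + H₂ ω / G₂ ω)) μ)
    (hH₁int : Integrable H₁ μ) (hH₂int : Integrable H₂ μ)
    (T : ℕ) (hT : 2 ≤ T) (ρ : ℝ) (hρ : ρ ^ 2 < 1)
    (S₁ S₂ Rplus RPD : ℝ → ℝ)
    (hS₁ : ∀ P : ℝ, S₁ P =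
      sSup {r : ℝ | ∃ f : ℝ → ℝ, Measurable f ∧ (∀ x, 0 ≤ f x) ∧
        (∫ ω, f (H₁ ω) ∂μ) ≤ P ∧
        r = ∫ ω, Real.log (1 + f (H₁ ω) * H₁ ω / (1 + f (H₁ ω) * G₁ ω)) ∂μ})
    (hS₂ : ∀ P : ℝ, S₂ P =
      sSup {r : ℝ | ∃ f : ℝ → ℝ, Measurable f ∧ (∀ x, 0 ≤ f x) ∧
        (∫ ω, f (H₂ ω) ∂μ) ≤ P ∧
        r = ∫ ω, Real.log (1 + f (H₂ ω) * H₂ ω / (1 + f (H₂ ω) * G₂ ω)) ∂μ})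
    (hRplus : ∀ P : ℝ, Rplus P =
      (1 / (T : ℝ)) * (-Real.log (1 - ρ ^ 2)) + S₁ P + S₂ P)
    (hRPD : ∀ P : ℝ, RPD P =
      (1 / (T : ℝ)) *
          (-Real.log (1 - ((P - Real.sqrt P) / ((P - Real.sqrt P) + 1)) ^ 2 * ρ ^ 2)) +
        (((T : ℝ) - 1) / (T : ℝ)) *
          ((∫ ω, Real.log (1 + (Real.sqrt P / ((T : ℝ) - 1)) * H₁ ω /
                (1 + (Real.sqrt P / ((T : ℝ) - 1)) * G₁ ω)) ∂μ) -
            Real.log (1 + (Real.sqrt P / ((T : ℝ) - 1)) / (1 + (P - Real.sqrt P))) +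
            (∫ ω, Real.log (1 + (Real.sqrt P / ((T : ℝ) - 1)) * H₂ ω /
                (1 + (Real.sqrt P / ((T : ℝ) - 1)) * G₂ ω)) ∂μ) -
            Real.log (1 + (Real.sqrt P / ((T : ℝ) - 1)) / (1 + (P - Real.sqrt P))))) :
    Tendsto (fun P : ℝ => Rplus P - RPD P) atTop
      (nhds (((∫ ω, Real.log (1 + H₁ ω / G₁ ω) ∂μ) +
        (∫ ω, Real.log (1 + H₂ ω / G₂ ω) ∂μ)) / (T : ℝ))) :=
  tendsto_gap_Rplus_RPD_atTop_general μ H₁ G₁ H₂ G₂ hH₁m hG₁m hH₂m hG₂m hH₁ hH₂ hG₁pos hG₂pos hint₁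
    hint₂ T hT ρ hρ S₁ S₂ Rplus RPD hS₁ hS₂ hRplus hRPD
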